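/- arXiv:math/9909091 — 11 statements merged into one kernel-verified Lean document; each statement's English description precedes it below -/
import Mathlib

section
/- Let f be a complex polynomial of degree n ≥ 2 with n distinct simple roots z₁, ..., zₙ. If f'(zₖ) is purely imaginary (and nonzero) for each k = 1, ..., n−1, then f'(zₙ) is also purely imaginary and nonzero. -/
/-!
A polynomial `f` of degree `n` with distinct roots `z₁, …, zₙ` is `c ∏ (X - zⱼ)`, so
`1 / f'(zₖ) = c⁻¹ ∏_{j ≠ k} (zₖ - zⱼ)⁻¹`. Summed over `k`, this is `c⁻¹` times the coefficient of
`X ^ (n - 1)` in the Lagrange interpolant of the constant `1`, which vanishes for `n ≥ 2`. Hence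
`∑ₖ 1 / f'(zₖ) = 0`; since `w` and `w⁻¹` are purely imaginary together, the last term is purely
imaginary as soon as the others are.
-/

open Polynomial Finset Lagrange

namespace Lagrange

variable {F ι : Type*} [Field F] {s : Finset ι} {v : ι → F}

theorem eq_C_leadingCoeff_mul_nodal {f : F[X]} (hvs : Set.InjOn v s) (hf : f.degree = #s)
    (hroot : ∀ i ∈ s, f.eval (v i) = 0) : f = C f.leadingCoeff * nodal s v := by
  have hc : f.leadingCoeff ≠ 0 := leadingCoeff_ne_zero.mpr fun h => by simp [h] at hf
  refine eq_of_degree_le_of_eval_index_eq s hvs hf.le ?_ ?_ fun i hi => ?_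
  · rw [degree_C_mul hc, degree_nodal, hf]
  · rw [leadingCoeff_mul, leadingCoeff_C, nodal_monic.leadingCoeff, mul_one]
  · rw [hroot i hi, eval_mul, eval_nodal_at_node hi, mul_zero]

variable [DecidableEq ι]

theorem sum_nodalWeight_eq_zero (hvs : Set.InjOn v s) (hs : 2 ≤ #s) :
    ∑ i ∈ s, nodalWeight s v i = 0 := by
  have hcoeff := coeff_eq_sum hvs (P := 1) (by rw [degree_one]; exact_mod_cast (by omega : 0 < #s))
  rw [coeff_one, if_neg (by omega)] at hcoeff
  simp only [hcoeff, eval_one, one_div, nodalWeight, prod_inv_distrib]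

theorem inv_eval_derivative_eq {f : F[X]} (hvs : Set.InjOn v s) (hf : f.degree = #s)
    (hroot : ∀ i ∈ s, f.eval (v i) = 0) {i : ι} (hi : i ∈ s) :
    (f.derivative.eval (v i))⁻¹ = f.leadingCoeff⁻¹ * nodalWeight s v i := by
  conv_lhs => rw [eq_C_leadingCoeff_mul_nodal hvs hf hroot]
  rw [derivative_C_mul, eval_mul, eval_C, mul_inv, nodalWeight_eq_eval_derivative_nodal hi]

theorem eval_derivative_ne_zero {f : F[X]} (hvs : Set.InjOn v s) (hf : f.degree = #s)
    (hroot : ∀ i ∈ s, f.eval (v i) = 0) {i : ι} (hi : i ∈ s) : f.derivative.eval (v i) ≠ 0 := by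
  have hc : f.leadingCoeff ≠ 0 := leadingCoeff_ne_zero.mpr fun h => by simp [h] at hf
  rw [Ne, ← inv_eq_zero, inv_eval_derivative_eq hvs hf hroot hi]
  exact mul_ne_zero (inv_ne_zero hc) (nodalWeight_ne_zero hvs hi)

theorem sum_inv_eval_derivative_eq_zero {f : F[X]} (hvs : Set.InjOn v s) (hf : f.degree = #s)
    (hs : 2 ≤ #s) (hroot : ∀ i ∈ s, f.eval (v i) = 0) :
    ∑ i ∈ s, (f.derivative.eval (v i))⁻¹ = 0 := by
  rw [sum_congr rfl fun i hi => inv_eval_derivative_eq hvs hf hroot hi, ← mul_sum,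
    sum_nodalWeight_eq_zero hvs hs, mul_zero]

end Lagrange

namespace Complex

theorem inv_re_eq_zero_iff {w : ℂ} : w⁻¹.re = 0 ↔ w.re = 0 := by
  rcases eq_or_ne w 0 with rfl | hw
  · simp
  · rw [inv_re, div_eq_zero_iff, or_iff_left (normSq_pos.mpr hw).ne']

theorem re_eq_zero_of_sum_inv_eq_zero {ι : Type*} {s : Finset ι} {w : ι → ℂ}
    (hsum : ∑ j ∈ s, (w j)⁻¹ = 0) {i : ι} (hi : i ∈ s)
    (hre : ∀ j ∈ s, j ≠ i → (w j).re = 0) : (w i).re = 0 := by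
  have hsum_re := congrArg re hsum
  rw [re_sum, sum_eq_single_of_mem i hi fun j hj hji =>
    inv_re_eq_zero_iff.mpr (hre j hj hji)] at hsum_re
  exact inv_re_eq_zero_iff.mp hsum_re

end Complex

theorem last_deriv_purely_imaginary_general
    (n : ℕ) (hn : 2 ≤ n) (f : Polynomial ℂ)
    (hdeg : f.natDegree = n)
    (z : Fin n → ℂ) (hinj : Function.Injective z)
    (hroot : ∀ k, f.eval (z k) = 0)
    (him : ∀ k : Fin n, (k : ℕ) < n - 1 → (f.derivative.eval (z k)).re = 0) :
    ∀ k : Fin n, (k : ℕ) = n - 1 →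
      (f.derivative.eval (z k)).re = 0 ∧ f.derivative.eval (z k) ≠ 0 := by
  intro k hk
  have hf : f.degree = #(univ : Finset (Fin n)) := by
    rw [card_univ, Fintype.card_fin, degree_eq_iff_natDegree_eq_of_pos (by omega), hdeg]
  have hroot_univ : ∀ i ∈ univ, f.eval (z i) = 0 := fun i _ => hroot i
  refine ⟨Complex.re_eq_zero_of_sum_inv_eq_zero
    (sum_inv_eval_derivative_eq_zero hinj.injOn hf (by simpa using hn) hroot_univ) (mem_univ k)
    fun j _ hjk => him j ?_, eval_derivative_ne_zero hinj.injOn hf hroot_univ (mem_univ k)⟩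
  have := Fin.val_ne_of_ne hjk
  omega

theorem last_deriv_purely_imaginary
    (n : ℕ) (hn : 2 ≤ n) (f : Polynomial ℂ)
    (hdeg : f.natDegree = n)
    (z : Fin n → ℂ) (hinj : Function.Injective z)
    (hroot : ∀ k, f.eval (z k) = 0)
    (hsimple : ∀ k, f.derivative.eval (z k) ≠ 0)
    (him : ∀ k : Fin n, (k : ℕ) < n - 1 → (f.derivative.eval (z k)).re = 0) :
    ∀ k : Fin n, (k : ℕ) = n - 1 →
      (f.derivative.eval (z k)).re = 0 ∧ f.derivative.eval (z k) ≠ 0 :=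
  last_deriv_purely_imaginary_general n hn f hdeg z hinj hroot him
end

section
/- The curve z(t) = x(t) + i y(t) with x(t) = cos(t/2)/√(2 cos t), y(t) = sin(t/2)/√(2 cos t) is a solution of the complex ODE z' = i z (1 − z²) on the interval (−π/2, π/2). -/
/-!
Writing `z(t) = e^{it/2} / √(2 cos t)`, the logarithmic derivative of `z` is `(i + tan t) / 2`.
On the other hand `z² = e^{it} / (2 cos t)`, so `1 - z² = e^{-it} / (2 cos t)` and
`i (1 - z²) = (i + tan t) / 2` as well.
-/

open Real Complex

noncomputable def separatrix (t : ℝ) : ℂ := cexp (↑(t / 2) * I) / ↑(√(2 * Real.cos t))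

lemma separatrix_eq (t : ℝ) :
    separatrix t = (Real.cos (t / 2) / Real.sqrt (2 * Real.cos t) : ℂ) +
      Complex.I * (Real.sin (t / 2) / Real.sqrt (2 * Real.cos t) : ℝ) := by
  rw [separatrix, exp_mul_I, ← ofReal_cos, ← ofReal_sin]
  push_cast
  ring

lemma hasDerivAt_separatrix {t : ℝ} (ht : 0 < Real.cos t) :
    HasDerivAt separatrix (separatrix t * ((I + Real.tan t) / 2)) t := by
  have hexp : HasDerivAt (fun s : ℝ => cexp (↑(s / 2) * I)) (cexp (↑(t / 2) * I) * (I / 2)) t := by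
    simpa [div_eq_inv_mul] using
      (((hasDerivAt_id t).div_const 2).ofReal_comp.mul_const I).cexp
  have hsqrt : HasDerivAt (fun s => √(2 * Real.cos s))
      (2 * -Real.sin t / (2 * √(2 * Real.cos t))) t :=
    ((Real.hasDerivAt_cos t).const_mul 2).sqrt (by positivity)
  have hr : (√(2 * Real.cos t) : ℂ) ≠ 0 :=
    ofReal_ne_zero.mpr (Real.sqrt_pos.mpr (by positivity)).ne'
  have hr2 : (√(2 * Real.cos t) : ℂ) ^ 2 = 2 * Real.cos t := by
    exact_mod_cast Real.sq_sqrt (by positivity)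
  have hc : (Real.cos t : ℂ) ≠ 0 := ofReal_ne_zero.mpr ht.ne'
  refine (hexp.div hsqrt.ofReal_comp hr).congr_deriv ?_
  rw [separatrix, Real.tan_eq_sin_div_cos]
  simp only [ofReal_div, ofReal_mul, ofReal_neg, ofReal_ofNat]
  field_simp
  linear_combination -↑(Real.sin t) * hr2

lemma separatrix_sq {t : ℝ} (ht : 0 < Real.cos t) :
    separatrix t ^ 2 = cexp (t * I) / (2 * Real.cos t) := by
  rw [separatrix, div_pow, ← Complex.exp_nat_mul, ← ofReal_pow, Real.sq_sqrt (by positivity)]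
  push_cast
  ring_nf

lemma I_mul_one_sub_separatrix_sq {t : ℝ} (ht : 0 < Real.cos t) :
    I * (1 - separatrix t ^ 2) = (I + Real.tan t) / 2 := by
  have hc : Complex.cos t ≠ 0 := by exact_mod_cast ht.ne'
  rw [separatrix_sq ht, exp_mul_I, Real.tan_eq_sin_div_cos]
  push_cast
  field_simp
  ring_nf
  rw [I_sq]
  ring

theorem separatrix_solves_complex_ode :
    ∀ t : ℝ, -(π / 2) < t → t < π / 2 →
      HasDerivAt
        (fun s : ℝ =>
          (Real.cos (s / 2) / Real.sqrt (2 * Real.cos s) : ℂ) +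
            Complex.I * (Real.sin (s / 2) / Real.sqrt (2 * Real.cos s) : ℝ))
        (Complex.I *
            ((Real.cos (t / 2) / Real.sqrt (2 * Real.cos t) : ℂ) +
              Complex.I * (Real.sin (t / 2) / Real.sqrt (2 * Real.cos t) : ℝ)) *
          (1 -
            ((Real.cos (t / 2) / Real.sqrt (2 * Real.cos t) : ℂ) +
              Complex.I * (Real.sin (t / 2) / Real.sqrt (2 * Real.cos t) : ℝ)) ^ 2))
        t := by
  intro t ht₁ ht₂
  have hc : 0 < Real.cos t := Real.cos_pos_of_mem_Ioo ⟨ht₁, ht₂⟩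
  simp only [← separatrix_eq]
  rw [mul_assoc, mul_left_comm, I_mul_one_sub_separatrix_sq hc]
  exact hasDerivAt_separatrix hc
end

section
/- For the system ẋ = −y, ẏ = x + x^{2m−1} y (x² + y²) written in polar coordinates (ρ, θ), the function t − θ − ρ^{2m+1} cos^{2m+1}(θ)/(2m+1) is constant along every solution; i.e., if (ρ(t), θ(t)) satisfies ρ' = ρ^{2m+2} cos^{2m−1}θ sin²θ and θ' = 1 + ρ^{2m+1} cos^{2m}θ sin θ, then d/dt [θ(t) + ρ(t)^{2m+1} cos^{2m+1}θ(t)/(2m+1)] = 1. -/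
/-!
In Cartesian coordinates `x = ρ cos θ`, `y = ρ sin θ` the polar equations give `ẋ = -y` and
`θ' = 1 + x^{2m} y`. Hence `d/dt [θ + x^{2m+1}/(2m+1)] = θ' + x^{2m} ẋ = 1`.
-/

open Real

theorem hasDerivAt_mul_cos_of_polar_system {m : ℕ} (hm : 1 ≤ m) {ρ θ : ℝ → ℝ} {t : ℝ}
    (hρ : HasDerivAt ρ (ρ t ^ (2 * m + 2) * cos (θ t) ^ (2 * m - 1) * sin (θ t) ^ 2) t)
    (hθ : HasDerivAt θ (1 + ρ t ^ (2 * m + 1) * cos (θ t) ^ (2 * m) * sin (θ t)) t) :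
    HasDerivAt (fun s => ρ s * cos (θ s)) (-(ρ t * sin (θ t))) t := by
  refine (hρ.mul hθ.cos).congr_deriv ?_
  rw [← pow_sub_one_mul (by omega : 2 * m ≠ 0) (cos (θ t))]
  ring

theorem isochronicity_invariant_polar
    (m : ℕ) (hm : 1 ≤ m) (ρ θ : ℝ → ℝ)
    (hρ : ∀ t, HasDerivAt ρ
      (ρ t ^ (2 * m + 2) * Real.cos (θ t) ^ (2 * m - 1) * Real.sin (θ t) ^ 2) t)
    (hθ : ∀ t, HasDerivAt θ
      (1 + ρ t ^ (2 * m + 1) * Real.cos (θ t) ^ (2 * m) * Real.sin (θ t)) t) :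
    ∀ t, HasDerivAt
      (fun s => θ s + ρ s ^ (2 * m + 1) * Real.cos (θ s) ^ (2 * m + 1) / (2 * m + 1))
      1 t := by
  intro t
  have hx := hasDerivAt_mul_cos_of_polar_system hm (hρ t) (hθ t)
  have h : HasDerivAt (fun s => θ s + (ρ s * cos (θ s)) ^ (2 * m + 1) / (2 * m + 1)) _ t :=
    (hθ t).add ((hx.pow (2 * m + 1)).div_const _)
  simp only [mul_pow] at h
  refine h.congr_deriv ?_
  rw [Nat.add_sub_cancel]
  push_cast
  field_simp
  ring
end

section
/- The vector field (x + xy + x³, y − x² + y² − x⁴) commutes with the Kukles field (−y, x + 3xy + x³); that is, their Lie bracket vanishes identically on ℝ². -/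
theorem kukles_commuting_field :
    let p : ℝ → ℝ → ℝ := fun x y => x + x * y + x ^ 3
    let q : ℝ → ℝ → ℝ := fun x y => y - x ^ 2 + y ^ 2 - x ^ 4
    let r : ℝ → ℝ → ℝ := fun x y => -y
    let s : ℝ → ℝ → ℝ := fun x y => x + 3 * x * y + x ^ 3
    ∀ x y : ℝ,
      r x y * deriv (fun t => p t y) x + s x y * deriv (fun t => p x t) y -
          p x y * deriv (fun t => r t y) x - q x y * deriv (fun t => r x t) y = 0 ∧
      r x y * deriv (fun t => q t y) x + s x y * deriv (fun t => q x t) y -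
          p x y * deriv (fun t => s t y) x - q x y * deriv (fun t => s x t) y = 0 := by
  intro p q r s x y
  have hp_x : deriv (fun t => p t y) x = 1 + y + 3 * x ^ 2 := by simp [p]
  have hp_y : deriv (fun t => p x t) y = x := by simp [p]
  have hq_x : deriv (fun t => q t y) x = -2 * x - 4 * x ^ 3 := by simp [q]
  have hq_y : deriv (fun t => q x t) y = 1 + 2 * y := by simp [q]
  have hr_x : deriv (fun t => r t y) x = 0 := by simp [r]
  have hr_y : deriv (fun t => r x t) y = -1 := by simp [r]
  have hs_x : deriv (fun t => s t y) x = 1 + 3 * y + 3 * x ^ 2 := by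
    refine HasDerivAt.deriv ?_
    convert ((hasDerivAt_id' x).fun_add (((hasDerivAt_id' x).const_mul 3).mul_const y)).fun_add
      (hasDerivAt_pow 3 x) using 1
    norm_num
  have hs_y : deriv (fun t => s x t) y = 3 * x := by simp [s]
  rw [hp_x, hp_y, hq_x, hq_y, hr_x, hr_y, hs_x, hs_y]
  constructor <;> ring
end

section
/- Let u, v : ℝ² → ℝ be smooth with uₓ v_y − u_y vₓ ≡ 1. Then the vector field (−u u_y − v v_y, u uₓ + v vₓ) commutes with the vector field (u v_y − v u_y, −u vₓ + v uₓ): their Lie bracket vanishes identically. -/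
/-!
The map `Φ = (u, v)` has Jacobian determinant `1`, so its derivative is injective everywhere.
Applying `DΦ` to the two vector fields gives the rotation field `(a, b) ↦ (-b, a)` and the Euler
field `(a, b) ↦ (a, b)` evaluated at `Φ`: the fields are `Φ`-related to them. Lie brackets of
related fields are related (symmetry of the second derivative of `Φ`), and the Euler field commutes
with every linear field, so `DΦ` kills the bracket, which therefore vanishes.
-/

open VectorField Filter Topology

section Partial

variable {G : Type*} [NormedAddCommGroup G] [NormedSpace ℝ G] {f : ℝ → ℝ → G}

theorem fderiv_uncurry_apply {x y : ℝ}
    (hf : DifferentiableAt ℝ (fun w : ℝ × ℝ => f w.1 w.2) (x, y)) (a b : ℝ) :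
    fderiv ℝ (fun w : ℝ × ℝ => f w.1 w.2) (x, y) (a, b) =
      a • deriv (fun t => f t y) x + b • deriv (fun t => f x t) y := by
  have h₁ : HasDerivAt (fun t => f t y)
      (fderiv ℝ (fun w : ℝ × ℝ => f w.1 w.2) (x, y) (1, 0)) x := by
    have := hf.hasFDerivAt.comp_hasDerivAt x ((hasDerivAt_id x).prodMk (hasDerivAt_const x y))
    exact this
  have h₂ : HasDerivAt (fun t => f x t)
      (fderiv ℝ (fun w : ℝ × ℝ => f w.1 w.2) (x, y) (0, 1)) y := by
    have := hf.hasFDerivAt.comp_hasDerivAt y ((hasDerivAt_const y x).prodMk (hasDerivAt_id y))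
    exact this
  rw [h₁.deriv, h₂.deriv, ← map_smul, ← map_smul, ← map_add]
  congr 1
  ext <;> simp

variable {m n : WithTop ℕ∞}

theorem ContDiff.deriv_fst_uncurry (hf : ContDiff ℝ n (fun w : ℝ × ℝ => f w.1 w.2))
    (hmn : m + 1 ≤ n) : ContDiff ℝ m (fun w : ℝ × ℝ => deriv (fun t => f t w.2) w.1) := by
  have hd := (hf.of_le (le_add_self.trans hmn)).differentiable one_ne_zero
  have h : (fun w : ℝ × ℝ => deriv (fun t => f t w.2) w.1) =
      fun w => fderiv ℝ (fun w : ℝ × ℝ => f w.1 w.2) w (1, 0) := by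
    funext w
    simpa using (fderiv_uncurry_apply (hd (w.1, w.2)) 1 0).symm
  rw [h]
  exact (hf.fderiv_right hmn).clm_apply contDiff_const

theorem ContDiff.deriv_snd_uncurry (hf : ContDiff ℝ n (fun w : ℝ × ℝ => f w.1 w.2))
    (hmn : m + 1 ≤ n) : ContDiff ℝ m (fun w : ℝ × ℝ => deriv (fun t => f w.1 t) w.2) := by
  have hd := (hf.of_le (le_add_self.trans hmn)).differentiable one_ne_zero
  have h : (fun w : ℝ × ℝ => deriv (fun t => f w.1 t) w.2) =
      fun w => fderiv ℝ (fun w : ℝ × ℝ => f w.1 w.2) w (0, 1) := by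
    funext w
    simpa using (fderiv_uncurry_apply (hd (w.1, w.2)) 0 1).symm
  rw [h]
  exact (hf.fderiv_right hmn).clm_apply contDiff_const

end Partial

theorem lieBracket_prodMk_uncurry {A B C D : ℝ → ℝ → ℝ} {x y : ℝ}
    (hA : DifferentiableAt ℝ (fun w : ℝ × ℝ => A w.1 w.2) (x, y))
    (hB : DifferentiableAt ℝ (fun w : ℝ × ℝ => B w.1 w.2) (x, y))
    (hC : DifferentiableAt ℝ (fun w : ℝ × ℝ => C w.1 w.2) (x, y))
    (hD : DifferentiableAt ℝ (fun w : ℝ × ℝ => D w.1 w.2) (x, y)) :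
    lieBracket ℝ (fun w => (A w.1 w.2, B w.1 w.2)) (fun w => (C w.1 w.2, D w.1 w.2)) (x, y) =
      (A x y * deriv (fun t => C t y) x + B x y * deriv (fun t => C x t) y -
          C x y * deriv (fun t => A t y) x - D x y * deriv (fun t => A x t) y,
        A x y * deriv (fun t => D t y) x + B x y * deriv (fun t => D x t) y -
          C x y * deriv (fun t => B t y) x - D x y * deriv (fun t => B x t) y) := by
  rw [lieBracket, hA.fderiv_prodMk hB, hC.fderiv_prodMk hD]
  simp only [ContinuousLinearMap.prod_apply, fderiv_uncurry_apply hA, fderiv_uncurry_apply hB,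
    fderiv_uncurry_apply hC, fderiv_uncurry_apply hD, smul_eq_mul, Prod.mk_sub_mk]
  ext <;> ring

theorem fderiv_apply_lieBracket_of_related {𝕜 E F : Type*} [NontriviallyNormedField 𝕜]
    [NormedAddCommGroup E] [NormedSpace 𝕜 E] [NormedAddCommGroup F] [NormedSpace 𝕜 F]
    {n : WithTop ℕ∞} {f : E → F} {V W : E → E} {V' W' : F → F} {x : E}
    (hf : ContDiffAt 𝕜 n f x) (hn : minSmoothness 𝕜 2 ≤ n)
    (hV : DifferentiableAt 𝕜 V x) (hW : DifferentiableAt 𝕜 W x)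
    (hV' : DifferentiableAt 𝕜 V' (f x)) (hW' : DifferentiableAt 𝕜 W' (f x))
    (hfV : (fun y => fderiv 𝕜 f y (V y)) =ᶠ[𝓝 x] fun y => V' (f y))
    (hfW : (fun y => fderiv 𝕜 f y (W y)) =ᶠ[𝓝 x] fun y => W' (f y)) :
    fderiv 𝕜 f x (lieBracket 𝕜 V W x) = lieBracket 𝕜 V' W' (f x) := by
  have hfx : DifferentiableAt 𝕜 f x :=
    hf.differentiableAt (ne_of_gt (lt_of_lt_of_le (by simp) (le_minSmoothness.trans hn)))
  rw [fderiv_apply_lieBracket hf hn hW hV, hfW.fderiv_eq, hfV.fderiv_eq,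
    fderiv_fun_comp x hW' hfx, fderiv_fun_comp x hV' hfx]
  simp only [ContinuousLinearMap.comp_apply, hfV.eq_of_nhds, hfW.eq_of_nhds, lieBracket]

theorem lieBracket_id_clm {𝕜 E : Type*} [NontriviallyNormedField 𝕜]
    [NormedAddCommGroup E] [NormedSpace 𝕜 E] (A : E →L[𝕜] E) (x : E) :
    lieBracket 𝕜 id A x = 0 := by
  simp [lieBracket]

def quarterTurn : ℝ × ℝ →L[ℝ] ℝ × ℝ :=
  (-ContinuousLinearMap.snd ℝ ℝ ℝ).prod (ContinuousLinearMap.fst ℝ ℝ ℝ)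

@[simp] theorem quarterTurn_apply (z : ℝ × ℝ) : quarterTurn z = (-z.2, z.1) := rfl

section AreaPreserving

variable {u v : ℝ → ℝ → ℝ}

noncomputable def rotationField (u v : ℝ → ℝ → ℝ) (w : ℝ × ℝ) : ℝ × ℝ :=
  (-(u w.1 w.2 * deriv (fun t => u w.1 t) w.2) - v w.1 w.2 * deriv (fun t => v w.1 t) w.2,
    u w.1 w.2 * deriv (fun t => u t w.2) w.1 + v w.1 w.2 * deriv (fun t => v t w.2) w.1)

noncomputable def eulerField (u v : ℝ → ℝ → ℝ) (w : ℝ × ℝ) : ℝ × ℝ :=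
  (u w.1 w.2 * deriv (fun t => v w.1 t) w.2 - v w.1 w.2 * deriv (fun t => u w.1 t) w.2,
    -(u w.1 w.2 * deriv (fun t => v t w.2) w.1) + v w.1 w.2 * deriv (fun t => u t w.2) w.1)

variable {m n : WithTop ℕ∞}

theorem contDiff_rotationField (hu : ContDiff ℝ n (fun w : ℝ × ℝ => u w.1 w.2))
    (hv : ContDiff ℝ n (fun w : ℝ × ℝ => v w.1 w.2)) (hmn : m + 1 ≤ n) :
    ContDiff ℝ m (rotationField u v) := by
  have := hu.deriv_fst_uncurry hmn
  have := hu.deriv_snd_uncurry hmn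
  have := hv.deriv_fst_uncurry hmn
  have := hv.deriv_snd_uncurry hmn
  have := hu.of_le (le_self_add.trans hmn)
  have := hv.of_le (le_self_add.trans hmn)
  unfold rotationField
  fun_prop

theorem contDiff_eulerField (hu : ContDiff ℝ n (fun w : ℝ × ℝ => u w.1 w.2))
    (hv : ContDiff ℝ n (fun w : ℝ × ℝ => v w.1 w.2)) (hmn : m + 1 ≤ n) :
    ContDiff ℝ m (eulerField u v) := by
  have := hu.deriv_fst_uncurry hmn
  have := hu.deriv_snd_uncurry hmn
  have := hv.deriv_fst_uncurry hmn
  have := hv.deriv_snd_uncurry hmn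
  have := hu.of_le (le_self_add.trans hmn)
  have := hv.of_le (le_self_add.trans hmn)
  unfold eulerField
  fun_prop

theorem fderiv_prodMk_uncurry_apply (hu : Differentiable ℝ (fun w : ℝ × ℝ => u w.1 w.2))
    (hv : Differentiable ℝ (fun w : ℝ × ℝ => v w.1 w.2)) (x y a b : ℝ) :
    fderiv ℝ (fun w : ℝ × ℝ => (u w.1 w.2, v w.1 w.2)) (x, y) (a, b) =
      (a * deriv (fun t => u t y) x + b * deriv (fun t => u x t) y,
        a * deriv (fun t => v t y) x + b * deriv (fun t => v x t) y) := by
  rw [(hu (x, y)).fderiv_prodMk (hv (x, y)), ContinuousLinearMap.prod_apply,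
    fderiv_uncurry_apply (hu (x, y)), fderiv_uncurry_apply (hv (x, y))]
  rfl

theorem fderiv_apply_rotationField
    (hu : Differentiable ℝ (fun w : ℝ × ℝ => u w.1 w.2))
    (hv : Differentiable ℝ (fun w : ℝ × ℝ => v w.1 w.2))
    (hjac : ∀ x y : ℝ, deriv (fun t => u t y) x * deriv (fun t => v x t) y -
      deriv (fun t => u x t) y * deriv (fun t => v t y) x = 1) (w : ℝ × ℝ) :
    fderiv ℝ (fun w : ℝ × ℝ => (u w.1 w.2, v w.1 w.2)) w (rotationField u v w) =
      quarterTurn (u w.1 w.2, v w.1 w.2) := by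
  obtain ⟨x, y⟩ := w
  rw [rotationField, fderiv_prodMk_uncurry_apply hu hv, quarterTurn_apply]
  ext
  · linear_combination (-v x y) * hjac x y
  · linear_combination u x y * hjac x y

theorem fderiv_apply_eulerField
    (hu : Differentiable ℝ (fun w : ℝ × ℝ => u w.1 w.2))
    (hv : Differentiable ℝ (fun w : ℝ × ℝ => v w.1 w.2))
    (hjac : ∀ x y : ℝ, deriv (fun t => u t y) x * deriv (fun t => v x t) y -
      deriv (fun t => u x t) y * deriv (fun t => v t y) x = 1) (w : ℝ × ℝ) :
    fderiv ℝ (fun w : ℝ × ℝ => (u w.1 w.2, v w.1 w.2)) w (eulerField u v w) =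
      (u w.1 w.2, v w.1 w.2) := by
  obtain ⟨x, y⟩ := w
  rw [eulerField, fderiv_prodMk_uncurry_apply hu hv]
  ext
  · linear_combination u x y * hjac x y
  · linear_combination v x y * hjac x y

theorem injective_fderiv_prodMk_uncurry
    (hu : Differentiable ℝ (fun w : ℝ × ℝ => u w.1 w.2))
    (hv : Differentiable ℝ (fun w : ℝ × ℝ => v w.1 w.2))
    (hjac : ∀ x y : ℝ, deriv (fun t => u t y) x * deriv (fun t => v x t) y -
      deriv (fun t => u x t) y * deriv (fun t => v t y) x = 1) (w : ℝ × ℝ) :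
    Function.Injective (fderiv ℝ (fun w : ℝ × ℝ => (u w.1 w.2, v w.1 w.2)) w) := by
  obtain ⟨x, y⟩ := w
  rw [injective_iff_map_eq_zero]
  rintro ⟨a, b⟩ h
  rw [fderiv_prodMk_uncurry_apply hu hv, Prod.mk_eq_zero] at h
  -- Cramer's rule: multiply `h` by the adjugate of the Jacobian matrix.
  refine Prod.mk_eq_zero.mpr ⟨?_, ?_⟩
  · linear_combination
      deriv (fun t => v x t) y * h.1 - deriv (fun t => u x t) y * h.2 - a * hjac x y
  · linear_combination
      deriv (fun t => u t y) x * h.2 - deriv (fun t => v t y) x * h.1 - b * hjac x y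

theorem lieBracket_eulerField_rotationField
    (hu : ContDiff ℝ 2 (fun w : ℝ × ℝ => u w.1 w.2))
    (hv : ContDiff ℝ 2 (fun w : ℝ × ℝ => v w.1 w.2))
    (hjac : ∀ x y : ℝ, deriv (fun t => u t y) x * deriv (fun t => v x t) y -
      deriv (fun t => u x t) y * deriv (fun t => v t y) x = 1) (w : ℝ × ℝ) :
    lieBracket ℝ (eulerField u v) (rotationField u v) w = 0 := by
  have hu₁ := hu.differentiable two_ne_zero
  have hv₁ := hv.differentiable two_ne_zero
  apply injective_fderiv_prodMk_uncurry hu₁ hv₁ hjac w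
  rw [map_zero, fderiv_apply_lieBracket_of_related (V' := id) (W' := quarterTurn)
    (hu.prodMk hv).contDiffAt (by simp)
    ((contDiff_eulerField hu hv (m := 1) (by norm_num)).differentiable one_ne_zero w)
    ((contDiff_rotationField hu hv (m := 1) (by norm_num)).differentiable one_ne_zero w)
    differentiableAt_id quarterTurn.differentiableAt
    (Eventually.of_forall (fderiv_apply_eulerField hu₁ hv₁ hjac))
    (Eventually.of_forall (fderiv_apply_rotationField hu₁ hv₁ hjac))]
  exact lieBracket_id_clm quarterTurn _

end AreaPreserving

theorem area_preserving_hamiltonian_commuting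
    (u v : ℝ → ℝ → ℝ)
    (hu : ContDiff ℝ 2 (fun w : ℝ × ℝ => u w.1 w.2))
    (hv : ContDiff ℝ 2 (fun w : ℝ × ℝ => v w.1 w.2))
    (hjac : ∀ x y : ℝ,
      deriv (fun t => u t y) x * deriv (fun t => v x t) y -
        deriv (fun t => u x t) y * deriv (fun t => v t y) x = 1) :
    let p : ℝ → ℝ → ℝ := fun x y =>
      -(u x y * deriv (fun t => u x t) y) - v x y * deriv (fun t => v x t) y
    let q : ℝ → ℝ → ℝ := fun x y =>
      u x y * deriv (fun t => u t y) x + v x y * deriv (fun t => v t y) x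
    let r : ℝ → ℝ → ℝ := fun x y =>
      u x y * deriv (fun t => v x t) y - v x y * deriv (fun t => u x t) y
    let s : ℝ → ℝ → ℝ := fun x y =>
      -(u x y * deriv (fun t => v t y) x) + v x y * deriv (fun t => u t y) x
    ∀ x y : ℝ,
      r x y * deriv (fun t => p t y) x + s x y * deriv (fun t => p x t) y -
          p x y * deriv (fun t => r t y) x - q x y * deriv (fun t => r x t) y = 0 ∧
      r x y * deriv (fun t => q t y) x + s x y * deriv (fun t => q x t) y -
          p x y * deriv (fun t => s t y) x - q x y * deriv (fun t => s x t) y = 0 := by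
  intro p q r s x y
  have hX := (contDiff_rotationField hu hv (m := 1) (by norm_num)).differentiable one_ne_zero
  have hY := (contDiff_eulerField hu hv (m := 1) (by norm_num)).differentiable one_ne_zero
  rw [← Prod.mk_eq_zero, ← lieBracket_prodMk_uncurry (A := r) (B := s) (C := p) (D := q)
    (hY (x, y)).fst (hY (x, y)).snd (hX (x, y)).fst (hX (x, y)).snd]
  exact lieBracket_eulerField_rotationField hu hv hjac (x, y)
end

section
/- Suppose the polynomial vector field (r, s) commutes with a field of the form (−y, q(x,y)) (i.e., the Lie bracket vanishes identically). Then s = y·rₓ − q·r_y, and r satisfies the PDE qₓ(r − y r_y) + (y q_y − q) rₓ + y² r_{xx} − 2 y q r_{xy} + q² r_{yy} = 0. -/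
open MvPolynomial

lemma pderiv_comm' {σ R : Type*} [CommSemiring R] (i j : σ) (p : MvPolynomial σ R) :
    pderiv i (pderiv j p) = pderiv j (pderiv i p) := by
  induction p using MvPolynomial.induction_on with
  | C a => simp
  | add p q hp hq => simp [hp, hq]
  | mul_X p n hp =>
    classical
    simp only [pderiv_mul, pderiv_X, Pi.single_apply, hp, map_add, map_mul, apply_ite (pderiv i), apply_ite (pderiv j),
      map_one, map_zero, pderiv_one]
    split_ifs <;> simp_all

theorem commuting_with_newton_field_pde
    (q r s : MvPolynomial (Fin 2) ℝ)
    -- the field (-y, q) commutes with (r, s): both Lie bracket components vanish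
    (hbr1 : r * pderiv 0 (-(X 1)) + s * pderiv 1 (-(X 1)) -
        (-(X 1)) * pderiv 0 r - q * pderiv 1 r = 0)
    (hbr2 : r * pderiv 0 q + s * pderiv 1 q -
        (-(X 1)) * pderiv 0 s - q * pderiv 1 s = 0) :
    s = X 1 * pderiv 0 r - q * pderiv 1 r ∧
    pderiv 0 q * (r - X 1 * pderiv 1 r) + (X 1 * pderiv 1 q - q) * pderiv 0 r +
        (X 1) ^ 2 * pderiv 0 (pderiv 0 r) -
        2 * X 1 * q * pderiv 1 (pderiv 0 r) +
        q ^ 2 * pderiv 1 (pderiv 1 r) = 0 := by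
  simp only [map_neg, pderiv_X, Pi.single_apply] at hbr1
  norm_num at hbr1
  have hs : s = X 1 * pderiv 0 r - q * pderiv 1 r := by linear_combination -hbr1
  refine ⟨hs, ?_⟩
  subst hs
  simp only [map_sub, map_mul, pderiv_mul, pderiv_X, Pi.single_apply] at hbr2
  norm_num at hbr2
  rw [pderiv_comm' 0 1 r] at hbr2
  linear_combination hbr2
end

section
/- Let p₁, p₂ be real polynomials with p₁(0) = 0, p₁'(0) = 1, p₂(0) = 1, satisfying 2 p₁' p₂ − p₁ p₂' = 2 identically, with deg p₂ > 0. Then deg p₂ = 2 · deg p₁, and there is a constant A with p₁(x) = x and p₂(x) = 1 + A x². -/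
/-!
In `2 p' q - p q' = c` the coefficient of degree `deg p + deg q - 1` on the left is
`(2 deg p - deg q) lc(p) lc(q)`, so as soon as `deg p + deg q ≥ 2` we get `deg q = 2 deg p`.
Since `p ^ 2` solves the homogeneous equation, subtracting from `q` the multiple of `p ^ 2` that
kills its coefficient of degree `2 deg p` gives another solution `s` with `deg s ≠ 2 deg p`
(`s ≠ 0` because `c ≠ 0`). Hence `deg p + deg s ≤ 1`: `p` is linear and `q = A p ^ 2 + const`.
-/

open Polynomial

namespace Polynomial

section CommRing

variable {R : Type*} [CommRing R]

theorem coeff_derivative_mul_natDegree_add_natDegree_sub_one (p q : R[X]) :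
    (derivative p * q).coeff (p.natDegree + q.natDegree - 1) =
      p.natDegree * p.leadingCoeff * q.leadingCoeff := by
  rcases Nat.eq_zero_or_pos p.natDegree with hp | hp
  · simp [derivative_of_natDegree_zero hp, hp]
  · rw [show p.natDegree + q.natDegree - 1 = (p.natDegree - 1) + q.natDegree by omega,
      coeff_mul_add_eq_of_natDegree_le (natDegree_derivative_le p) le_rfl, coeff_derivative,
      Nat.sub_add_cancel hp, Nat.cast_pred hp, sub_add_cancel, leadingCoeff, leadingCoeff]
    ring

theorem two_mul_derivative_mul_sub_mul_derivative_C_mul_sq (p : R[X]) (A : R) :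
    2 * derivative p * (C A * p ^ 2) - p * derivative (C A * p ^ 2) = 0 := by
  rw [derivative_C_mul, derivative_sq, C_ofNat]
  ring

variable [IsDomain R] [CharZero R]

theorem natDegree_eq_two_mul_of_two_mul_derivative_mul_sub_mul_derivative_eq_C
    {p q : R[X]} {c : R} (h : 2 * derivative p * q - p * derivative q = C c)
    (hp : p ≠ 0) (hq : q ≠ 0) (hdeg : 2 ≤ p.natDegree + q.natDegree) :
    q.natDegree = 2 * p.natDegree := by
  have key := congrArg (coeff · (p.natDegree + q.natDegree - 1)) h
  simp only [coeff_sub, mul_assoc, coeff_ofNat_mul, coeff_C,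
    if_neg (show p.natDegree + q.natDegree - 1 ≠ 0 by omega)] at key
  rw [coeff_derivative_mul_natDegree_add_natDegree_sub_one, mul_comm p, add_comm p.natDegree,
    coeff_derivative_mul_natDegree_add_natDegree_sub_one] at key
  have hcoeff :
      ((2 * p.natDegree : ℕ) - q.natDegree : R) * (p.leadingCoeff * q.leadingCoeff) = 0 := by
    push_cast
    linear_combination key
  rcases mul_eq_zero.1 hcoeff with h | h
  · exact_mod_cast (sub_eq_zero.1 h).symm
  · exact absurd h (mul_ne_zero (leadingCoeff_ne_zero.2 hp) (leadingCoeff_ne_zero.2 hq))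

end CommRing

variable {K : Type*} [Field K] [CharZero K]

theorem natDegree_eq_one_and_exists_eq_C_mul_sq_add_C {p q : K[X]} {c : K}
    (h : 2 * derivative p * q - p * derivative q = C c) (hc : c ≠ 0) (hp : 0 < p.natDegree) :
    p.natDegree = 1 ∧ ∃ A d : K, q = C A * p ^ 2 + C d := by
  have hp0 : p ≠ 0 := ne_zero_of_natDegree_gt hp
  set A := q.coeff (2 * p.natDegree) / p.leadingCoeff ^ 2
  set s := q - C A * p ^ 2 with hs
  have hids : 2 * derivative p * s - p * derivative s = C c := by
    rw [hs, derivative_sub]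
    linear_combination h - two_mul_derivative_mul_sub_mul_derivative_C_mul_sq p A
  have hs0 : s ≠ 0 := by
    rintro hs0
    simpa [hs0, hc] using hids.symm
  have hsdeg : s.natDegree ≠ 2 * p.natDegree := by
    intro hsdeg
    apply leadingCoeff_ne_zero.2 hs0
    have hsq : (p ^ 2).coeff (2 * p.natDegree) = p.leadingCoeff ^ 2 := by
      rw [sq, two_mul, coeff_mul_degree_add_degree, sq]
    rw [leadingCoeff, hsdeg, hs, coeff_sub, coeff_C_mul, hsq,
      div_mul_cancel₀ _ (pow_ne_zero 2 (leadingCoeff_ne_zero.2 hp0)), sub_self]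
  have hsmall : p.natDegree + s.natDegree < 2 := lt_of_not_ge fun hdeg =>
    hsdeg (natDegree_eq_two_mul_of_two_mul_derivative_mul_sub_mul_derivative_eq_C hids hp0 hs0 hdeg)
  refine ⟨by omega, A, s.coeff 0, ?_⟩
  rw [← eq_C_of_natDegree_eq_zero (by omega : s.natDegree = 0), hs]
  ring

end Polynomial

theorem key_polynomial_identity_solution
    (p₁ p₂ : Polynomial ℝ)
    (h10 : p₁.eval 0 = 0) (h11 : (derivative p₁).eval 0 = 1)
    (h20 : p₂.eval 0 = 1)
    (hid : 2 * derivative p₁ * p₂ - p₁ * derivative p₂ = 2)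
    (hdeg : 0 < p₂.natDegree) :
    p₂.natDegree = 2 * p₁.natDegree ∧
    ∃ A : ℝ, p₁ = X ∧ p₂ = 1 + C A * X ^ 2 := by
  have hp₁ : 0 < p₁.natDegree := by
    by_contra! h
    simp [derivative_of_natDegree_zero (Nat.le_zero.1 h)] at h11
  rw [← C_ofNat] at hid
  obtain ⟨hp₁deg, A, d, hp₂⟩ :=
    natDegree_eq_one_and_exists_eq_C_mul_sq_add_C hid two_ne_zero hp₁
  have hX : p₁ = X := by
    have hc1 : p₁.coeff 1 = 1 := by
      simpa [← coeff_zero_eq_eval_zero, coeff_derivative] using h11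
    rw [eq_X_add_C_of_natDegree_le_one hp₁deg.le, hc1, coeff_zero_eq_eval_zero, h10]
    simp
  have hd : d = 1 := by simpa [hp₂, hX] using h20
  refine ⟨natDegree_eq_two_mul_of_two_mul_derivative_mul_sub_mul_derivative_eq_C hid
    (ne_zero_of_natDegree_gt hp₁) (ne_zero_of_natDegree_gt hdeg) (by omega), A, hX, ?_⟩
  rw [hp₂, hX, hd, map_one, add_comm]
end

section
/- Let q₀, q₁, q₂, q₃ be real polynomials with q₀(0) = 0, q₀'(0) = 1, q₁(0) = 0, satisfying q₂ q₀ = 3 q₁² − q₀' + 1 and q₃ q₀² = q₁³ − q₁' q₀ + q₁. Then q₀(x) = x + A x³ for some constant A ≥ 0. -/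
/-!
Since `q₀ ∣ q₁ (q₁² + 1)` and the two factors are coprime, `q₀ = s t` with `s ∣ q₁` and
`t ∣ q₁² + 1`. Reducing the first relation modulo `s` and modulo `t` shows that `s t` divides
`2 s' t - s t' - 2`, a polynomial of smaller degree, so `2 s' t = s t' + 2`. Comparing leading
coefficients in this equation forces `deg t = 2 deg s` unless `deg s = 1` and `t` is constant.
The equation is also solved by `t - c s²`, and choosing `c` to cancel the coefficient of degree
`2 deg s` leaves only the second alternative: `s = b X` and `t = c b² X² + c₀` with `b c₀ = 1`,
that is `q₀ = X + A X³`. If `A < 0`, then at a real root `x` of `1 + A x²` we get `q₀(x) = 0`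
and `q₀'(x) = -2`, so the first relation reads `3 q₁(x)² + 3 = 0`.
-/

open Polynomial

theorem coeff_derivative_mul_natDegree_add_sub_one {R : Type*} [Semiring R] (p q : R[X]) :
    (derivative p * q).coeff (p.natDegree + q.natDegree - 1) =
      p.leadingCoeff * p.natDegree * q.leadingCoeff := by
  rcases Nat.eq_zero_or_pos p.natDegree with hp | hp
  · rw [eq_C_of_natDegree_eq_zero hp]
    simp
  obtain ⟨a, ha⟩ : ∃ a, p.natDegree = a + 1 := ⟨_, (Nat.succ_pred_eq_of_pos hp).symm⟩
  have hp' : (derivative p).natDegree ≤ a := by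
    simpa [ha] using natDegree_derivative_le p
  rw [show p.natDegree + q.natDegree - 1 = a + q.natDegree by omega,
    coeff_mul_add_eq_of_natDegree_le hp' le_rfl, coeff_derivative, ← ha, leadingCoeff, ha]
  push_cast
  rfl

theorem degree_derivative_mul_lt {R : Type*} [Semiring R] [NoZeroDivisors R] {p q : R[X]}
    (hp : p ≠ 0) (hq : q ≠ 0) : (derivative p * q).degree < (p * q).degree := by
  rw [degree_mul, degree_mul]
  exact WithBot.add_lt_add_right (degree_ne_bot.mpr hq) (degree_derivative_lt hp)

theorem natDegree_eq_two_mul_or_of_two_derivative_mul_eq {R : Type*} [CommRing R] [IsDomain R]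
    [CharZero R] {s u : R[X]} (hs : 1 ≤ s.natDegree) (hu : u ≠ 0)
    (h : 2 * derivative s * u = s * derivative u + 2) :
    u.natDegree = 2 * s.natDegree ∨ (s.natDegree = 1 ∧ u.natDegree = 0) := by
  have hcoeff := congrArg (coeff · (s.natDegree + u.natDegree - 1)) h
  simp only [mul_assoc, coeff_ofNat_mul, coeff_add] at hcoeff
  rw [mul_comm s, coeff_derivative_mul_natDegree_add_sub_one, add_comm s.natDegree,
    coeff_derivative_mul_natDegree_add_sub_one] at hcoeff
  rcases Nat.eq_zero_or_pos (u.natDegree + s.natDegree - 1) with hn | hn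
  · exact Or.inr (by omega)
  rw [← C_ofNat, coeff_C, if_neg hn.ne', add_zero] at hcoeff
  have hlead : s.leadingCoeff * u.leadingCoeff * ((u.natDegree : R) - 2 * s.natDegree) = 0 := by
    linear_combination -hcoeff
  have hs0 : s ≠ 0 := ne_zero_of_natDegree_gt hs
  exact Or.inl <| by
    exact_mod_cast (by simpa [hs0, hu, sub_eq_zero] using hlead :
      (u.natDegree : R) = 2 * s.natDegree)

variable {K : Type*} [Field K]

theorem exists_mul_eq_X_add_C_mul_X_pow_three [CharZero K] {s t : K[X]} (hs0 : s.eval 0 = 0)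
    (h : 2 * derivative s * t = s * derivative t + 2) : ∃ A, s * t = X + C A * X ^ 3 := by
  have hs : s ≠ 0 := by
    rintro rfl
    simpa using congrArg (eval 0) h
  have hdeg : 1 ≤ s.natDegree := Nat.pos_of_ne_zero fun h0 => hs <| by
    rw [eq_C_of_natDegree_eq_zero h0, coeff_zero_eq_eval_zero, hs0, C_0]
  set c := t.coeff (2 * s.natDegree) / s.leadingCoeff ^ 2
  set r := t - C c * s ^ 2 with hr_def
  have hr : 2 * derivative s * r = s * derivative r + 2 := by
    simp only [r, derivative_sub, derivative_mul, derivative_C, derivative_pow,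
      Nat.cast_ofNat, map_ofNat]
    linear_combination h
  have hr0 : r ≠ 0 := by
    intro hr0
    rw [hr0] at hr
    simpa using congrArg (eval 0) hr
  have hrcoeff : r.coeff (2 * s.natDegree) = 0 := by
    rw [hr_def, coeff_sub, coeff_C_mul, coeff_pow_mul_natDegree,
      div_mul_cancel₀ _ (pow_ne_zero _ (leadingCoeff_ne_zero.mpr hs)), sub_self]
  obtain ⟨hs1, hr1⟩ : s.natDegree = 1 ∧ r.natDegree = 0 :=
    (natDegree_eq_two_mul_or_of_two_derivative_mul_eq hdeg hr0 hr).resolve_left fun hk =>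
      hr0 (leadingCoeff_eq_zero.mp (by rwa [leadingCoeff, hk]))
  set b := s.coeff 1
  set c₀ := r.coeff 0
  have hsX : s = C b * X := by
    simpa [coeff_zero_eq_eval_zero, hs0] using eq_X_add_C_of_natDegree_le_one hs1.le
  have hrC : r = C c₀ := eq_C_of_natDegree_eq_zero hr1
  have hbc : C b * C c₀ = 1 := by
    rw [hsX, hrC, derivative_C_mul_X, derivative_C, mul_zero, zero_add, mul_assoc] at hr
    exact mul_left_cancel₀ two_ne_zero (hr.trans (mul_one 2).symm)
  refine ⟨c * b ^ 3, ?_⟩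
  rw [show t = r + C c * s ^ 2 by ring, hrC, hsX]
  simp only [map_mul, map_pow]
  linear_combination X * hbc

theorem exists_factorization_of_relations {q₀ q₁ q₂ q₃ : K[X]} (h00 : q₀.eval 0 = 0)
    (h10 : q₁.eval 0 = 0) (hrel1 : q₂ * q₀ = 3 * q₁ ^ 2 - derivative q₀ + 1)
    (hrel2 : q₃ * q₀ ^ 2 = q₁ ^ 3 - derivative q₁ * q₀ + q₁) :
    ∃ s t : K[X], q₀ = s * t ∧ s.eval 0 = 0 ∧ 2 * derivative s * t = s * derivative t + 2 := by
  have hq₀ : q₀ ≠ 0 := by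
    rintro rfl
    simpa [h10] using congrArg (eval 0) hrel1
  obtain ⟨s, t, ⟨p, hp⟩, ⟨w, hw⟩, rfl⟩ :=
    exists_dvd_and_dvd_of_dvd_mul (⟨q₃ * q₀ + derivative q₁, by linear_combination -hrel2⟩ :
      q₀ ∣ q₁ * (q₁ ^ 2 + 1))
  have hcop : IsCoprime s t :=
    ((show IsCoprime q₁ (q₁ ^ 2 + 1) from ⟨-q₁, 1, by ring⟩).of_isCoprime_of_dvd_left
      ⟨p, hp⟩).of_isCoprime_of_dvd_right ⟨w, hw⟩
  have ht0 : t.eval 0 ≠ 0 := fun h0 => by simpa [h10, h0] using congrArg (eval 0) hw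
  have hs : s ≠ 0 := left_ne_zero_of_mul hq₀
  have ht : t ≠ 0 := right_ne_zero_of_mul hq₀
  rw [derivative_mul] at hrel1
  have hdvd : s * t ∣ 2 * derivative s * t - s * derivative t - 2 :=
    hcop.mul_dvd
      ⟨6 * s * p ^ 2 - 3 * derivative t - 2 * t * q₂,
        by linear_combination 2 * hrel1 + 6 * (q₁ + s * p) * hp⟩
      ⟨3 * derivative s - 3 * w + s * q₂, by linear_combination -hrel1 - 3 * hw⟩
  have hdeg : (2 * derivative s * t - s * derivative t - 2).degree < (s * t).degree := by
    refine (degree_sub_le _ _).trans_lt (max_lt ((degree_sub_le _ _).trans_lt (max_lt ?_ ?_)) ?_)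
    · calc (2 * derivative s * t).degree = ((2 : K) • (derivative s * t)).degree := by
            rw [smul_eq_C_mul, C_ofNat, mul_assoc]
        _ ≤ (derivative s * t).degree := degree_smul_le _ _
        _ < (s * t).degree := degree_derivative_mul_lt hs ht
    · rw [mul_comm s, mul_comm s]
      exact degree_derivative_mul_lt ht hs
    · rw [← C_ofNat]
      exact degree_C_le.trans_lt (degree_pos_of_root hq₀ h00)
  refine ⟨s, t, rfl, ?_, by linear_combination eq_zero_of_dvd_of_degree_lt hdvd hdeg⟩
  simpa [ht0] using h00

theorem nonneg_of_eq_X_add_C_mul_X_pow_three {q₁ q₂ : ℝ[X]} {A : ℝ}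
    (hrel : q₂ * (X + C A * X ^ 3) = 3 * q₁ ^ 2 - derivative (X + C A * X ^ 3) + 1) : 0 ≤ A := by
  by_contra! hA
  set x := Real.sqrt (-A⁻¹)
  have hx : A * x ^ 2 = -1 := by
    rw [Real.sq_sqrt (by simpa using hA.le), mul_neg, mul_inv_cancel₀ hA.ne]
  have hq₁ : 3 * q₁.eval x ^ 2 + 3 = 0 := by
    have h := congrArg (eval x) hrel
    norm_num at h
    linear_combination -h + (q₂.eval x * x + 3) * hx
  exact absurd hq₁ (by positivity)

theorem abel_q0_form_general
    (q₀ q₁ q₂ q₃ : Polynomial ℝ)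
    (h00 : q₀.eval 0 = 0)
    (h10 : q₁.eval 0 = 0)
    (hrel1 : q₂ * q₀ = 3 * q₁ ^ 2 - derivative q₀ + 1)
    (hrel2 : q₃ * q₀ ^ 2 = q₁ ^ 3 - derivative q₁ * q₀ + q₁) :
    ∃ A : ℝ, 0 ≤ A ∧ q₀ = X + C A * X ^ 3 := by
  obtain ⟨s, t, rfl, hs0, hst⟩ := exists_factorization_of_relations h00 h10 hrel1 hrel2
  obtain ⟨A, hA⟩ := exists_mul_eq_X_add_C_mul_X_pow_three hs0 hst
  exact ⟨A, nonneg_of_eq_X_add_C_mul_X_pow_three (hA ▸ hrel1), hA⟩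

theorem abel_q0_form
    (q₀ q₁ q₂ q₃ : Polynomial ℝ)
    (h00 : q₀.eval 0 = 0) (h01 : (derivative q₀).eval 0 = 1)
    (h10 : q₁.eval 0 = 0)
    (hrel1 : q₂ * q₀ = 3 * q₁ ^ 2 - derivative q₀ + 1)
    (hrel2 : q₃ * q₀ ^ 2 = q₁ ^ 3 - derivative q₁ * q₀ + q₁) :
    ∃ A : ℝ, 0 ≤ A ∧ q₀ = X + C A * X ^ 3 :=
  abel_q0_form_general q₀ q₁ q₂ q₃ h00 h10 hrel1 hrel2
end

section
/- Let a ∈ ℝ and h a smooth real function. Under the change of variables X = x, Y = y/(1 + h(x)y) (valid where 1 + h(x)y ≠ 0), solutions of the system ẋ = −y, ẏ = (x + a²x³)(1 + h(x)y)³ + 3axy(1 + h(x)y)² − h'(x)y³ satisfy λ Ẋ = −Y and λ Ẏ = X + 3aXY + a²X³ with λ = 1 − h(X)Y. -/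
/-!
With `D = 1 + h(x) y`, the factor `λ = 1 - h(X) Y` equals `1 / D`, and the quotient rule gives
`Ẏ = (ẏ - h'(x) ẋ y²) / D²`. Along the system `ẋ = -y` the term `h'(x) ẋ y² = -h'(x) y³` cancels the
last term of `ẏ`, so `λ Ẏ = ((x + a²x³) D³ + 3axy D²) / D³`, which is the claimed right-hand side.
-/

theorem hasDerivAt_div_one_add_mul_comp {h x y : ℝ → ℝ} {h' x' y' t : ℝ}
    (hh : HasDerivAt h h' (x t)) (hx : HasDerivAt x x' t) (hy : HasDerivAt y y' t)
    (hne : 1 + h (x t) * y t ≠ 0) :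
    HasDerivAt (fun s => y s / (1 + h (x s) * y s))
      ((y' - h' * x' * y t ^ 2) / (1 + h (x t) * y t) ^ 2) t := by
  have hD : HasDerivAt (fun s => 1 + h (x s) * y s) (h' * x' * y t + h (x t) * y') t := by
    simpa using ((hh.comp t hx).mul hy).const_add 1
  refine (hy.div hD hne).congr_deriv ?_
  ring

theorem one_sub_mul_div_one_add_mul {K : Type*} [Field K] {c y : K} (hne : 1 + c * y ≠ 0) :
    1 - c * (y / (1 + c * y)) = 1 / (1 + c * y) := by
  field_simp
  ring

theorem abel_system_change_of_variables
    (a : ℝ) (h : ℝ → ℝ) (hh : ContDiff ℝ 1 h)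
    (x y : ℝ → ℝ)
    (hx : ∀ t, HasDerivAt x (-(y t)) t)
    (hy : ∀ t, HasDerivAt y
      ((x t + a ^ 2 * x t ^ 3) * (1 + h (x t) * y t) ^ 3 +
        3 * a * x t * y t * (1 + h (x t) * y t) ^ 2 -
        deriv h (x t) * y t ^ 3) t)
    (hne : ∀ t, 1 + h (x t) * y t ≠ 0) :
    let X : ℝ → ℝ := x
    let Y : ℝ → ℝ := fun t => y t / (1 + h (x t) * y t)
    ∀ t, ∃ X' Y' : ℝ,
      HasDerivAt X X' t ∧ HasDerivAt Y Y' t ∧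
      (1 - h (X t) * Y t) * X' = -(Y t) ∧
      (1 - h (X t) * Y t) * Y' = X t + 3 * a * X t * Y t + a ^ 2 * X t ^ 3 := by
  intro X Y t
  have hht : HasDerivAt h (deriv h (x t)) (x t) :=
    ((hh.differentiable one_ne_zero) (x t)).hasDerivAt
  refine ⟨_, _, hx t, hasDerivAt_div_one_add_mul_comp hht (hx t) (hy t) (hne t), ?_, ?_⟩ <;>
    simp only [X, Y, one_sub_mul_div_one_add_mul (hne t)]
  · field_simp
  · field_simp [hne t]
    ring
end

section
/- Suppose the real polynomial q(x,y) = q₀(x) + q₁(x)y + q₂(x)y² + q₃(x)y³ + ... + qₙ(x)yⁿ has degree n ≥ 4 in y with qₙ ≢ 0, and a polynomial r(x,y) = r₀(x) + r₁(x)y (degree ≤ 1 in y) satisfies qₓ(r − y r_y) + (y q_y − q) rₓ + y² r_{xx} − 2yq r_{xy} + q² r_{yy} = 0 identically. If moreover qₓ(0,0) = 1, then r₁ is constant, r₀ = 0; hence r(x,y) = −c·y for some constant c. -/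
/-!
Viewing `q` and `r = r₀ + r₁ y` as elements of `ℝ[x][y]`, the equation is a polynomial identity.
Its `y^(n+1)` coefficient is `(n - 3) qₙ r₁' = 0`, so `r₁` is constant. Its `yⁿ` coefficient is
then `qₙ' r₀ + (n - 1) qₙ r₀' = 0`, i.e. `(qₙ r₀^(n-1))' = 0`, and comparing degrees shows that
`r₀` is constant. What is left of the identity is `q_x r₀ = 0`, and `q_x(0,0) = 1` gives `r₀ = 0`.
-/

open Polynomial
open scoped Polynomial.Bivariate

namespace Polynomial

lemma coeff_sum_range_C_mul_X_pow {R : Type*} [Semiring R] (f : ℕ → R) (N k : ℕ) :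
    (∑ i ∈ Finset.range N, C (f i) * X ^ i).coeff k = if k < N then f k else 0 := by
  simp [finsetSum_coeff]

lemma derivative_eq_zero_of_derivative_mul_add_mul_derivative_eq_zero {R : Type*} [CommRing R]
    [IsDomain R] [CharZero R] {p r : R[X]} {c : ℕ} (hc : c ≠ 0) (hp : p ≠ 0)
    (h : derivative p * r + c * p * derivative r = 0) : derivative r = 0 := by
  obtain ⟨c, rfl⟩ := Nat.exists_eq_succ_of_ne_zero hc
  rcases eq_or_ne r 0 with rfl | hr
  · simp
  have hconst : derivative (p * r ^ (c + 1)) = 0 :=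
    calc derivative (p * r ^ (c + 1))
        = r ^ c * (derivative p * r + ↑(c + 1) * p * derivative r) := by
          rw [derivative_mul, derivative_pow, C_eq_natCast, Nat.add_sub_cancel]; ring
      _ = 0 := by rw [h, mul_zero]
  have hdeg := derivative_eq_zero.mp hconst
  rw [natDegree_mul hp (pow_ne_zero _ hr), natDegree_pow] at hdeg
  exact derivative_eq_zero.mpr
    ((mul_eq_zero.mp (Nat.eq_zero_of_add_eq_zero hdeg).2).resolve_left c.succ_ne_zero)

lemma eq_zero_of_forall_evalEval_eq_zero {R : Type*} [CommRing R] [IsDomain R] [Infinite R]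
    {p : R[X][Y]} (h : ∀ x y, p.evalEval x y = 0) : p = 0 := by
  ext1 n
  refine funext fun x => ?_
  have hx : p.map (evalRingHom x) = 0 :=
    funext fun y => by simpa [map_evalRingHom_eval] using h x y
  simpa using congrArg (coeff · n) hx

section CommRing

variable {R : Type*} [CommRing R]

/-- The partial derivative `∂/∂x` of `p(x, y) = p.evalEval x y`; `derivative` is `∂/∂y`. -/
noncomputable def derivX (p : R[X][Y]) : R[X][Y] :=
  p.sum fun n a => monomial n (derivative a)

@[simp]
lemma coeff_derivX (p : R[X][Y]) (n : ℕ) : (derivX p).coeff n = derivative (p.coeff n) := by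
  rw [derivX, Polynomial.sum, finsetSum_coeff, Finset.sum_eq_single n]
  · simp
  · intro m _ hmn; simp [coeff_monomial, hmn]
  · intro hn; simp [notMem_support_iff.mp hn]

lemma derivative_eval_C (p : R[X][Y]) (y : R) :
    derivative (p.eval (C y)) = (derivX p).eval (C y) := by
  induction p using Polynomial.induction_on' with
  | add p q hp hq =>
    have hadd : derivX (p + q) = derivX p + derivX q := by ext1 n; simp
    simp [hadd, hp, hq]
  | monomial n a =>
    have hmon : derivX (monomial n a) = monomial n (derivative a) := by
      ext1 m; simp only [coeff_derivX, coeff_monomial]; split_ifs <;> simp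
    rw [hmon, eval_monomial, eval_monomial, ← C_pow, mul_comm, derivative_C_mul, mul_comm]

lemma derivX_C_add_C_mul_X (a b : R[X]) :
    derivX (C a + C b * Y) = C (derivative a) + C (derivative b) * Y := by
  ext1 n
  rcases n with _ | _ | n <;> simp [coeff_C, coeff_X]

noncomputable def commutingPDE (q r : R[X][Y]) : R[X][Y] :=
  derivX q * (r - Y * derivative r) + (Y * derivative q - q) * derivX r +
    Y ^ 2 * derivX (derivX r) - 2 * Y * q * derivative (derivX r) +
    q ^ 2 * derivative (derivative r)

lemma commutingPDE_C_add_C_mul_X (q : R[X][Y]) (a b : R[X]) :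
    commutingPDE q (C a + C b * Y) =
      derivX q * C a + (Y * derivative q - q) * C (derivative a) +
        Y * (Y * derivative q - 3 * q) * C (derivative b) +
        Y ^ 2 * C (derivative (derivative a)) + Y ^ 3 * C (derivative (derivative b)) := by
  simp only [commutingPDE, derivX_C_add_C_mul_X, derivative_add, derivative_mul, derivative_C,
    derivative_X, derivative_one, derivative_zero]
  ring

lemma coeff_commutingPDE_C_add_C_mul_X (q : R[X][Y]) (a b : R[X]) (k : ℕ) :
    (commutingPDE q (C a + C b * Y)).coeff (k + 4) =
      derivative (q.coeff (k + 4)) * a + ↑(k + 3) * q.coeff (k + 4) * derivative a +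
        ↑k * q.coeff (k + 3) * derivative b := by
  rw [commutingPDE_C_add_C_mul_X]
  simp only [sub_mul, X_pow_mul_C, coeff_add, coeff_mul_C, coeff_derivX, coeff_sub, coeff_X_mul,
    coeff_derivative, Nat.cast_add, Nat.cast_ofNat, coeff_ofNat_mul, coeff_mul_X_pow, coeff_C_succ,
    add_zero]
  ring

end CommRing

section NontriviallyNormedField

variable {𝕜 : Type*} [NontriviallyNormedField 𝕜]

lemma deriv_evalEval_right (p : 𝕜[X][Y]) (x y : 𝕜) :
    deriv (fun t => p.evalEval x t) y = (derivative p).evalEval x y := by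
  simp_rw [← map_evalRingHom_eval]
  rw [Polynomial.deriv, derivative_map]

lemma deriv_evalEval_left (p : 𝕜[X][Y]) (x y : 𝕜) :
    deriv (fun t => p.evalEval t y) x = (derivX p).evalEval x y := by
  rw [evalEval, ← derivative_eval_C]
  exact Polynomial.deriv _

lemma evalEval_commutingPDE (q r : 𝕜[X][Y]) (x y : 𝕜) :
    (commutingPDE q r).evalEval x y =
      deriv (fun t => q.evalEval t y) x *
          (r.evalEval x y - y * deriv (fun t => r.evalEval x t) y) +
        (y * deriv (fun t => q.evalEval x t) y - q.evalEval x y) *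
          deriv (fun t => r.evalEval t y) x +
        y ^ 2 * deriv (fun t => deriv (fun u => r.evalEval u y) t) x -
        2 * y * q.evalEval x y * deriv (fun t => deriv (fun u => r.evalEval u t) x) y +
        q.evalEval x y ^ 2 * deriv (fun t => deriv (fun u => r.evalEval x u) t) y := by
  have h2 : (2 : 𝕜[X][Y]).evalEval x y = 2 := map_ofNat (evalEvalRingHom x y) 2
  simp only [deriv_evalEval_left, deriv_evalEval_right, commutingPDE, evalEval_add,
    evalEval_sub, evalEval_mul, evalEval_pow, evalEval_X, h2]

end NontriviallyNormedField

end Polynomial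

theorem newton_degree_ge_four_commuting_trivial
    (n : ℕ) (hn : 4 ≤ n) (qc : ℕ → Polynomial ℝ) (hqn : qc n ≠ 0)
    (r₀ r₁ : Polynomial ℝ) :
    let q : ℝ → ℝ → ℝ := fun x y => ∑ i ∈ Finset.range (n + 1), (qc i).eval x * y ^ i
    let r : ℝ → ℝ → ℝ := fun x y => r₀.eval x + r₁.eval x * y
    (deriv (fun t => q t 0) 0 = 1) →
    (∀ x y : ℝ,
      deriv (fun t => q t y) x * (r x y - y * deriv (fun t => r x t) y) +
        (y * deriv (fun t => q x t) y - q x y) * deriv (fun t => r t y) x +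
        y ^ 2 * deriv (fun t => deriv (fun u => r u y) t) x -
        2 * y * q x y * deriv (fun t => deriv (fun u => r u t) x) y +
        q x y ^ 2 * deriv (fun t => deriv (fun u => r x u) t) y = 0) →
    ∃ c : ℝ, r₁ = C (-c) ∧ r₀ = 0 ∧ ∀ x y : ℝ, r x y = -c * y := by
  intro q r hq₀ hpde
  obtain ⟨m, rfl⟩ : ∃ m, n = m + 4 := ⟨n - 4, by omega⟩
  set Q : ℝ[X][Y] := ∑ i ∈ Finset.range (m + 4 + 1), C (qc i) * Y ^ i
  have hq : q = fun x y => Q.evalEval x y := by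
    funext x y; simp [q, Q, evalEval_finsetSum, evalEval_C]
  have hr : r = fun x y => (C r₀ + C r₁ * Y).evalEval x y := by
    funext x y; simp [r, evalEval_C]
  simp only [hq, hr] at hq₀ hpde
  have hE : commutingPDE Q (C r₀ + C r₁ * Y) = 0 :=
    eq_zero_of_forall_evalEval_eq_zero fun x y => (evalEval_commutingPDE ..).trans (hpde x y)
  have hQ : ∀ k, Q.coeff k = if k < m + 4 + 1 then qc k else 0 :=
    coeff_sum_range_C_mul_X_pow qc _
  have hr₁ : derivative r₁ = 0 := by
    have h : ((m + 1 : ℕ) : ℝ[X]) * qc (m + 4) * derivative r₁ = 0 := by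
      simpa [hE, hQ] using (coeff_commutingPDE_C_add_C_mul_X Q r₀ r₁ (m + 1)).symm
    exact (mul_eq_zero.mp h).resolve_left (mul_ne_zero (by exact_mod_cast m.succ_ne_zero) hqn)
  have hr₀' : derivative r₀ = 0 := by
    refine derivative_eq_zero_of_derivative_mul_add_mul_derivative_eq_zero
      (c := m + 3) (by omega) hqn ?_
    simpa [hE, hQ, hr₁] using (coeff_commutingPDE_C_add_C_mul_X Q r₀ r₁ m).symm
  have hr₀ : r₀ = 0 := by
    have hQx : (derivX Q).evalEval 0 0 = 1 := by rw [← deriv_evalEval_left]; exact hq₀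
    rw [commutingPDE_C_add_C_mul_X, hr₁, hr₀'] at hE
    simp only [map_zero, mul_zero, add_zero, mul_eq_zero, C_eq_zero] at hE
    exact hE.resolve_left fun h => by simp [h] at hQx
  obtain ⟨c, rfl⟩ : ∃ c, r₁ = C c := ⟨_, eq_C_of_derivative_eq_zero hr₁⟩
  exact ⟨-c, by rw [neg_neg], hr₀, fun x y => by simp [r, hr₀]⟩
end

section
/- For a = 1, the Kukles-type vector field (−Y, X + 3aXY + a²X³) and the field (X + aXY + a²X³, Y − aX² + aY² − a³X⁴) reduce to the pair ((−y, x + 3xy + x³), (x + xy + x³, y − x² + y² − x⁴)), and these two polynomial fields commute, i.e., their Lie bracket vanishes identically, and they are linearly independent at every point of a punctured neighborhood of the origin. -/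
theorem kukles_field_commutes_and_transversal :
    let p : ℝ → ℝ → ℝ := fun _ y => -y
    let q : ℝ → ℝ → ℝ := fun x y => x + 3 * x * y + x ^ 3
    let r : ℝ → ℝ → ℝ := fun x y => x + x * y + x ^ 3
    let s : ℝ → ℝ → ℝ := fun x y => y - x ^ 2 + y ^ 2 - x ^ 4
    (∀ x y : ℝ,
      r x y * deriv (fun t => p t y) x + s x y * deriv (fun t => p x t) y -
          p x y * deriv (fun t => r t y) x - q x y * deriv (fun t => r x t) y = 0 ∧
      r x y * deriv (fun t => q t y) x + s x y * deriv (fun t => q x t) y -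
          p x y * deriv (fun t => s t y) x - q x y * deriv (fun t => s x t) y = 0) ∧
    ∃ ε > (0 : ℝ), ∀ x y : ℝ, 0 < x ^ 2 + y ^ 2 → x ^ 2 + y ^ 2 < ε →
      p x y * s x y - q x y * r x y ≠ 0 := by
  intro p q r s
  constructor
  · intro x y
    have hp1 : deriv (fun t => p t y) x = 0 := by simp [p]
    have hp2 : deriv (fun t => p x t) y = -1 := by
      have h : HasDerivAt (fun t : ℝ => -t) (-1) y := (hasDerivAt_id y).neg
      simpa [p] using h.deriv
    have hq1 : deriv (fun t => q t y) x = 1 + 3 * y + 3 * x ^ 2 := by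
      have h : HasDerivAt (fun t : ℝ => t + 3 * t * y + t ^ 3)
          (1 + 3 * y + 3 * x ^ 2) x := by
        have := ((hasDerivAt_id x).add
          (((hasDerivAt_id x).const_mul (3 : ℝ)).mul_const y)).add (hasDerivAt_pow 3 x)
        refine this.congr_deriv ?_
        push_cast; ring
      simpa [q] using h.deriv
    have hq2 : deriv (fun t => q x t) y = 3 * x := by
      have h : HasDerivAt (fun t : ℝ => x + 3 * x * t + x ^ 3) (3 * x) y := by
        have := (((hasDerivAt_id y).const_mul (3 * x)).const_add x).add_const (x ^ 3)
        refine this.congr_deriv ?_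
        ring
      simpa [q] using h.deriv
    have hr1 : deriv (fun t => r t y) x = 1 + y + 3 * x ^ 2 := by
      have h : HasDerivAt (fun t : ℝ => t + t * y + t ^ 3) (1 + y + 3 * x ^ 2) x := by
        have := ((hasDerivAt_id x).add
          ((hasDerivAt_id x).mul_const y)).add (hasDerivAt_pow 3 x)
        refine this.congr_deriv ?_
        push_cast; ring
      simpa [r] using h.deriv
    have hr2 : deriv (fun t => r x t) y = x := by
      have h : HasDerivAt (fun t : ℝ => x + x * t + x ^ 3) x y := by
        have := (((hasDerivAt_id y).const_mul x).const_add x).add_const (x ^ 3)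
        refine this.congr_deriv ?_
        ring
      simpa [r] using h.deriv
    have hs1 : deriv (fun t => s t y) x = -2 * x - 4 * x ^ 3 := by
      have h : HasDerivAt (fun t : ℝ => y - t ^ 2 + y ^ 2 - t ^ 4)
          (-2 * x - 4 * x ^ 3) x := by
        have := (((hasDerivAt_pow 2 x).const_sub y).add_const (y ^ 2)).sub
          (hasDerivAt_pow 4 x)
        refine this.congr_deriv ?_
        push_cast; ring
      simpa [s] using h.deriv
    have hs2 : deriv (fun t => s x t) y = 1 + 2 * y := by
      have h : HasDerivAt (fun t : ℝ => t - x ^ 2 + t ^ 2 - x ^ 4) (1 + 2 * y) y := by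
        have := (((hasDerivAt_id y).sub_const (x ^ 2)).add (hasDerivAt_pow 2 y)).sub_const
          (x ^ 4)
        refine this.congr_deriv ?_
        push_cast; ring
      simpa [s] using h.deriv
    rw [hp1, hp2, hq1, hq2, hr1, hr2, hs1, hs2]
    constructor <;> (simp only [p, q, r, s]; ring)
  · refine ⟨1 / 100, by norm_num, fun x y hpos hlt => ?_⟩
    have hx2 : x ^ 2 ≤ x ^ 2 + y ^ 2 := by nlinarith [sq_nonneg y]
    have hy2 : y ^ 2 ≤ x ^ 2 + y ^ 2 := by nlinarith [sq_nonneg x]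
    have hy10 : -(1/10 : ℝ) ≤ y := by nlinarith [sq_nonneg (y + 1/10)]
    have h1 : (0:ℝ) ≤ (y + 1/10) * x ^ 2 := mul_nonneg (by linarith) (sq_nonneg x)
    have h2 : (0:ℝ) ≤ (y + 1/10) * y ^ 2 := mul_nonneg (by linarith) (sq_nonneg y)
    have h3 : (0:ℝ) ≤ (y + 1/10) * x ^ 4 := mul_nonneg (by linarith) (by positivity)
    have hneg : p x y * s x y - q x y * r x y < 0 := by
      simp only [p, q, r, s]
      nlinarith [sq_nonneg x, sq_nonneg y, sq_nonneg (x^2), sq_nonneg (x^3),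
        sq_nonneg (x*y), h1, h2, h3, hpos, hlt, hx2, hy2]
    linarith
end
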